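/- arXiv:1801.09942 — 4 statements merged into one kernel-verified Lean document; each statement's English description precedes it below -/
import Mathlib

section
/- Every smooth solution u(t,x) of the combined system u_t − 6 u u_x + u_{xxx} = 0 and u u_{tx} − u_t u_x = 0 with u nowhere zero and u_{xx} nowhere zero satisfies u_t = 0 and u_{xxx} − 6 u u_x = 0. -/
/-- Smooth solutions of the combined KdV–Wronskian system with u nowhere zero and
u_{xx} nowhere zero satisfy u_t = 0 and u_{xxx} - 6 u u_x = 0. -/
theorem kdv_wronskian_case1 (u : ℝ → ℝ → ℝ)
    (hu : ContDiff ℝ (⊤ : ℕ∞) (fun p : ℝ × ℝ => u p.1 p.2))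
    (hkdv : ∀ t x, deriv (fun s => u s x) t - 6 * u t x * deriv (u t) x
      + deriv (deriv (deriv (u t))) x = 0)
    (hwr : ∀ t x, u t x * deriv (fun y => deriv (fun s => u s y) t) x
      - deriv (fun s => u s x) t * deriv (u t) x = 0)
    (hne : ∀ t x, u t x ≠ 0)
    (hxx : ∀ t x, deriv (deriv (u t)) x ≠ 0) :
    ∀ t x, deriv (fun s => u s x) t = 0 ∧
      deriv (deriv (deriv (u t))) x - 6 * u t x * deriv (u t) x = 0 := by
  set U : ℝ × ℝ → ℝ := fun p => u p.1 p.2 with hU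
  have hUd : Differentiable ℝ U := hu.differentiable (by simp)
  -- partial derivative in t
  set ut : ℝ → ℝ → ℝ := fun t x => fderiv ℝ U (t, x) (1, 0) with hut
  have L1 : ∀ t x, HasDerivAt (fun s => u s x) (ut t x) t := by
    intro t x
    exact (hUd (t, x)).hasFDerivAt.comp_hasDerivAt t
      (HasDerivAt.prodMk (hasDerivAt_id t) (hasDerivAt_const t x))
  have L2 : ∀ t x, HasDerivAt (u t) (fderiv ℝ U (t, x) (0, 1)) x := by
    intro t x
    exact (hUd (t, x)).hasFDerivAt.comp_hasDerivAt x
      (HasDerivAt.prodMk (hasDerivAt_const x t) (hasDerivAt_id x))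
  -- smoothness of ut
  have hutc : ContDiff ℝ (⊤ : ℕ∞) (fun p : ℝ × ℝ => fderiv ℝ U p (1, 0)) :=
    (hu.fderiv_right (by simp)).clm_apply contDiff_const
  have hutd : ∀ t, Differentiable ℝ (fun x => ut t x) := by
    intro t
    exact ((hutc.differentiable (by simp)).comp
      ((differentiable_const t).prodMk differentiable_id))
  -- Step 1: wronskian ⇒ ut t x * u t 0 = ut t 0 * u t x
  have hstep1 : ∀ t x, ut t x * u t 0 = ut t 0 * u t x := by
    intro t x
    have HQ : ∀ y, HasDerivAt (fun z => ut t z / u t z) 0 y := by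
      intro y
      have h1 : HasDerivAt (fun z => ut t z) (deriv (fun z => ut t z) y) y :=
        ((hutd t) y).hasDerivAt
      have h2 := L2 t y
      have hq := h1.div h2 (hne t y)
      have hw := hwr t y
      have he : (fun z => deriv (fun s => u s z) t) = fun z => ut t z :=
        funext fun z => (L1 t z).deriv
      rw [he, (L1 t y).deriv, (L2 t y).deriv] at hw
      have hz : (deriv (fun z => ut t z) y * u t y -
          ut t y * fderiv ℝ U (t, y) (0, 1)) / u t y ^ 2 = 0 := by
        rw [show deriv (fun z => ut t z) y * u t y -
            ut t y * fderiv ℝ U (t, y) (0, 1) = 0 by linarith]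
        simp
      rwa [hz] at hq
    have hc : (fun z => ut t z / u t z) x = (fun z => ut t z / u t z) 0 :=
      is_const_of_deriv_eq_zero (fun y => (HQ y).differentiableAt)
        (fun y => (HQ y).deriv) x 0
    rw [div_eq_div_iff (hne t x) (hne t 0)] at hc
    exact hc
  -- Step 2: separation u t x = μ t * u 0 x with μ t = u t 0 / u 0 0
  have hsep : ∀ t x, u t x = (u t 0 / u 0 0) * u 0 x := by
    intro t x
    have HP : ∀ s, HasDerivAt (fun r => u r x / u r 0) 0 s := by
      intro s
      have hp := (L1 s x).div (L1 s 0) (hne s 0)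
      have hz : (ut s x * u s 0 - u s x * ut s 0) / u s 0 ^ 2 = 0 := by
        rw [show ut s x * u s 0 - u s x * ut s 0 = 0 by
          have := hstep1 s x; linarith]
        simp
      rwa [hz] at hp
    have hc : (fun r => u r x / u r 0) t = (fun r => u r x / u r 0) 0 :=
      is_const_of_deriv_eq_zero (fun s => (HP s).differentiableAt)
        (fun s => (HP s).deriv) t 0
    simp only at hc
    rw [div_eq_div_iff (hne t 0) (hne 0 0)] at hc
    rw [div_mul_eq_mul_div, eq_div_iff (hne 0 0)]
    linear_combination hc
  set μ : ℝ → ℝ := fun t => u t 0 / u 0 0 with hμdef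
  set g : ℝ → ℝ := u 0 with hgdef
  have hμ0 : μ 0 = 1 := div_self (hne 0 0)
  have hμne : ∀ t, μ t ≠ 0 := fun t => div_ne_zero (hne t 0) (hne 0 0)
  set μ' : ℝ → ℝ := fun t => ut t 0 / u 0 0 with hμ'def
  have hμd : ∀ t, HasDerivAt μ (μ' t) t := fun t => (L1 t 0).div_const _
  have hsep2 : ∀ t x, u t x = μ t * g x := fun t x => hsep t x
  -- rewrite KdV in separated form
  have hE : ∀ t x, μ' t * g x - 6 * (μ t * g x) * (μ t * deriv g x)
      + μ t * deriv (deriv (deriv g)) x = 0 := by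
    intro t x
    have hk := hkdv t x
    have e1 : (fun s => u s x) = fun s => μ s * g x := funext fun s => hsep2 s x
    have e2 : u t = fun y => μ t * g y := funext fun y => hsep2 t y
    have e3 : deriv (u t) = fun y => μ t * deriv g y := by
      rw [e2]; exact deriv_const_mul_field' (μ t)
    have e4 : deriv (deriv (u t)) = fun y => μ t * deriv (deriv g) y := by
      rw [e3]; exact deriv_const_mul_field' (μ t)
    have A : deriv (fun s => u s x) t = μ' t * g x := by
      rw [e1]; exact ((hμd t).mul_const (g x)).deriv
    have B : deriv (u t) x = μ t * deriv g x := by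
      rw [e2]; exact deriv_const_mul_field (μ t)
    have C : deriv (deriv (deriv (u t))) x = μ t * deriv (deriv (deriv g)) x := by
      rw [e4]; exact deriv_const_mul_field (μ t)
    rw [A, B, C, hsep2 t x] at hk
    linarith [hk]
  set a : ℝ := μ' 0 with hadef
  have hg3 : ∀ x, deriv (deriv (deriv g)) x = 6 * g x * deriv g x - a * g x := by
    intro x
    have := hE 0 x
    rw [hμ0] at this
    linarith [this]
  have hbr : ∀ t x, μ' t - a * μ t + 6 * μ t * (1 - μ t) * deriv g x = 0 := by
    intro t x
    have hb : g x * (μ' t - a * μ t + 6 * μ t * (1 - μ t) * deriv g x) = 0 := by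
      linear_combination hE t x - μ t * hg3 x
    rcases mul_eq_zero.mp hb with h | h
    · exact absurd h (hne 0 x)
    · exact h
  -- Step 4: μ ≡ 1
  have hμ1 : ∀ t, μ t = 1 := by
    intro t
    by_contra h
    have hc : (6 : ℝ) * μ t * (1 - μ t) ≠ 0 := by
      have h1 : (1 : ℝ) - μ t ≠ 0 := sub_ne_zero.mpr (Ne.symm h)
      exact mul_ne_zero (mul_ne_zero (by norm_num) (hμne t)) h1
    have hgp : ∀ x, deriv g x = deriv g 0 := by
      intro x
      have h1 := hbr t x
      have h2 := hbr t 0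
      have : 6 * μ t * (1 - μ t) * deriv g x = 6 * μ t * (1 - μ t) * deriv g 0 := by
        linarith
      exact mul_left_cancel₀ hc this
    have hcg : deriv g = fun _ => deriv g 0 := funext hgp
    have : deriv (deriv g) 0 = 0 := by rw [hcg]; simp
    exact hxx 0 0 this
  -- Step 5: conclude
  intro t x
  have hconst : (fun s => u s x) = fun _ => g x := by
    funext s
    rw [hsep2 s x, hμ1 s, one_mul]
  have hd : deriv (fun s => u s x) t = 0 := by rw [hconst]; simp
  exact ⟨hd, by have := hkdv t x; linarith [this]⟩
end

section
/- The solution sets of the three systems {u_t = 0, u_{xxx} − 6uu_x = 0, u ≠ 0, u_{xx} ≠ 0 (as functions)}, {u_t − 6uu_x = 0, u_{xx} = 0, u ≠ 0}, and {u = 0} are pairwise disjoint, and their union equals the solution set of {u_t − 6uu_x + u_{xxx} = 0, u u_{tx} − u_t u_x = 0} among smooth functions u(t,x). -/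
/-!
All equations live in the ring `𝒜` of real-analytic functions on `ℝ²`, which is an integral
domain by the identity theorem and carries the two commuting derivations `∂ₜ`, `∂ₓ` (symmetry of
second derivatives); the partition is then a statement of differential algebra.

The only nontrivial inclusion is that a solution with `u_xx ≠ 0` is stationary. Where `u ≠ 0`,
the Wronskian condition says `u_t = c(t) u`; differentiating KdV in `t` gives `c' = 6 c u_x`, and
differentiating once more in `x` gives `c u_xx = 0`. Cleared of the division by `u`, this is the
identity `u³ u_t u_xx = 0`, valid for any two commuting derivations of a commutative algebra over
a field of characteristic zero, and the absence of zero divisors finishes the argument.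
-/

open Set

/-- Solutions of the combined KdV–Wronskian system among analytic functions on ℝ². -/
def KdVWronskianSol : Set (ℝ → ℝ → ℝ) :=
  {u | AnalyticOnNhd ℝ (fun p : ℝ × ℝ => u p.1 p.2) univ ∧
    ∀ t x, deriv (fun s => u s x) t - 6 * u t x * deriv (u t) x
        + deriv (deriv (deriv (u t))) x = 0 ∧
      u t x * deriv (fun y => deriv (fun s => u s y) t) x
        - deriv (fun s => u s x) t * deriv (u t) x = 0}

/-- First simple system: u_t = 0, u_{xxx} - 6 u u_x = 0, u ≠ 0 and u_{xx} ≠ 0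
(not identically zero). -/
def ThomasSys1 : Set (ℝ → ℝ → ℝ) :=
  {u | AnalyticOnNhd ℝ (fun p : ℝ × ℝ => u p.1 p.2) univ ∧
    (∀ t x, deriv (fun s => u s x) t = 0 ∧
      deriv (deriv (deriv (u t))) x - 6 * u t x * deriv (u t) x = 0) ∧
    ¬ (∀ t x, u t x = 0) ∧ ¬ (∀ t x, deriv (deriv (u t)) x = 0)}

/-- Second simple system: u_t - 6 u u_x = 0, u_{xx} = 0, u ≠ 0 (not identically zero). -/
def ThomasSys2 : Set (ℝ → ℝ → ℝ) :=
  {u | AnalyticOnNhd ℝ (fun p : ℝ × ℝ => u p.1 p.2) univ ∧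
    (∀ t x, deriv (fun s => u s x) t - 6 * u t x * deriv (u t) x = 0 ∧
      deriv (deriv (u t)) x = 0) ∧
    ¬ (∀ t x, u t x = 0)}

/-- Third simple system: u = 0. -/
def ThomasSys3 : Set (ℝ → ℝ → ℝ) :=
  {u | AnalyticOnNhd ℝ (fun p : ℝ × ℝ => u p.1 p.2) univ ∧ ∀ t x, u t x = 0}

section AnalyticFunctions

variable {𝕜 E : Type*} [NontriviallyNormedField 𝕜]
  [NormedAddCommGroup E] [NormedSpace 𝕜 E]

variable (𝕜 E) in
def analyticFunctions : Subalgebra 𝕜 (E → 𝕜) where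
  carrier := {f | AnalyticOnNhd 𝕜 f univ}
  mul_mem' hf hg := hf.mul hg
  add_mem' hf hg := hf.add hg
  algebraMap_mem' _ := analyticOnNhd_const

namespace analyticFunctions

lemma differentiableAt_coe (f : analyticFunctions 𝕜 E) (p : E) :
    DifferentiableAt 𝕜 (f : E → 𝕜) p :=
  (f.2 p trivial).differentiableAt

@[simp]
lemma coe_ofNat (n : ℕ) [n.AtLeastTwo] :
    ((ofNat(n) : analyticFunctions 𝕜 E) : E → 𝕜) = ofNat(n) := rfl

instance [PreconnectedSpace E] : NoZeroDivisors (analyticFunctions 𝕜 E) where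
  eq_zero_or_eq_zero_of_mul_eq_zero {f g} hfg := by
    refine or_iff_not_imp_left.2 fun hf => ?_
    obtain ⟨p, hp⟩ : ∃ p, (f : E → 𝕜) p ≠ 0 := by
      by_contra! h
      exact hf (Subtype.ext (funext h))
    have hf_ne : ∀ᶠ q in nhds p, (f : E → 𝕜) q ≠ 0 :=
      (f.2 p trivial).continuousAt.eventually_ne hp
    refine Subtype.ext (AnalyticOnNhd.eq_of_eventuallyEq (z₀ := p) g.2 analyticOnNhd_const ?_)
    filter_upwards [hf_ne] with q hq
    have := congrFun (congrArg Subtype.val hfg) q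
    simp only [Subalgebra.coe_mul, Pi.mul_apply, ZeroMemClass.coe_zero, Pi.zero_apply] at this
    exact (mul_eq_zero.1 this).resolve_left hq

variable [CompleteSpace 𝕜]

variable (𝕜) in
noncomputable def dirDeriv (v : E) : Derivation 𝕜 (analyticFunctions 𝕜 E) (analyticFunctions 𝕜 E) :=
  Derivation.mk'
    { toFun f := ⟨fun p => fderiv 𝕜 f p v, fun p _ =>
        ((ContinuousLinearMap.apply 𝕜 𝕜 v).analyticAt _).comp (f.2.fderiv p trivial)⟩
      map_add' f g := Subtype.ext <| funext fun p => by
        simp [fderiv_add (differentiableAt_coe f p) (differentiableAt_coe g p)]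
      map_smul' c f := Subtype.ext <| funext fun p => by
        simp [fderiv_const_smul (differentiableAt_coe f p)] }
    fun f g => Subtype.ext <| funext fun p => by
      simp [fderiv_mul (differentiableAt_coe f p) (differentiableAt_coe g p)]

lemma coe_dirDeriv (v : E) (f : analyticFunctions 𝕜 E) :
    (dirDeriv 𝕜 v f : E → 𝕜) = fun p => fderiv 𝕜 f p v := rfl

lemma dirDeriv_comm (v w : E) (f : analyticFunctions 𝕜 E) :
    dirDeriv 𝕜 v (dirDeriv 𝕜 w f) = dirDeriv 𝕜 w (dirDeriv 𝕜 v f) := by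
  ext p
  simp only [coe_dirDeriv]
  have hsymm := ((f.2 p trivial).contDiffAt).isSymmSndFDerivAt_of_omega w v
  have hd := (f.2.fderiv p trivial).differentiableAt
  rw [fderiv_clm_apply hd (differentiableAt_const v), fderiv_clm_apply hd (differentiableAt_const w)]
  simpa using hsymm.symm

end analyticFunctions

end AnalyticFunctions

@[simp]
lemma Derivation.map_ofNat {R A M : Type*} [CommSemiring R] [CommSemiring A] [AddCommMonoid M]
    [Algebra R A] [Module A M] [Module R M] (D : Derivation R A M) (n : ℕ) [n.AtLeastTwo] :
    D (ofNat(n) : A) = 0 :=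
  D.map_natCast n

section KdVWronskian

variable {R A : Type*} [Field R] [CharZero R] [CommRing A] [Algebra R A]
  {Dt Dx : Derivation R A A}

theorem pow_three_mul_eq_zero_of_kdv_wronskian
    (hcomm : ∀ a, Dt (Dx a) = Dx (Dt a)) {u : A}
    (hkdv : Dt u - 6 * u * Dx u + Dx (Dx (Dx u)) = 0)
    (hwr : u * Dx (Dt u) - Dt u * Dx u = 0) :
    u ^ 3 * (Dt u * Dx (Dx u)) = 0 := by
  have hwr_x := congrArg Dx hwr
  have hwr_xx := congrArg Dx hwr_x
  have hkdv_t := congrArg Dt hkdv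
  have hwr_t := congrArg Dt hwr
  simp only [map_sub, map_add, Derivation.leibniz, smul_eq_mul, map_zero, hcomm,
    Derivation.map_ofNat, mul_zero, add_zero] at hwr_x hwr_xx hkdv_t hwr_t
  set w := Dt u
  -- with `c = w / u`, the bracket is `u² (c' - 6 c u_x)`
  have hR : u * (u * Dt w - 6 * u * w * Dx u - w ^ 2) = 0 := by
    linear_combination u ^ 2 * hkdv_t + 6 * u ^ 2 * hwr - u * hwr_xx - u * w * hkdv
      + Dx u * hwr_x - Dx (Dx u) * hwr
  have hR_x := congrArg Dx hR
  simp only [map_sub, Derivation.leibniz, Derivation.leibniz_pow, smul_eq_mul, map_zero,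
    Derivation.map_ofNat, mul_zero, add_zero] at hR_x
  have h6 : 6 * (u ^ 3 * (w * Dx (Dx u))) = 0 := by
    linear_combination -u * hR_x + 3 * Dx u * hR + u ^ 2 * hwr_t - 6 * u ^ 2 * Dx u * hwr
      - 2 * u * w * hwr
  have h6_unit : IsUnit (6 : A) := by
    rw [← map_ofNat (algebraMap R A) 6]
    exact (isUnit_iff_ne_zero.2 (by norm_num)).map _
  exact h6_unit.mul_right_eq_zero.1 h6

theorem kdv_wronskian_thomas_decomposition [NoZeroDivisors A]
    (hcomm : ∀ a, Dt (Dx a) = Dx (Dt a)) (u : A) :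
    (((Dt u = 0 ∧ Dx (Dx (Dx u)) - 6 * u * Dx u = 0) ∧ u ≠ 0 ∧ Dx (Dx u) ≠ 0) ∨
      ((Dt u - 6 * u * Dx u = 0 ∧ Dx (Dx u) = 0) ∧ u ≠ 0)) ∨ u = 0 ↔
    Dt u - 6 * u * Dx u + Dx (Dx (Dx u)) = 0 ∧ u * Dx (Dt u) - Dt u * Dx u = 0 := by
  constructor
  · rintro ((⟨⟨ht, hx⟩, -⟩ | ⟨⟨h, hxx⟩, -⟩) | rfl)
    · simp only [ht, map_zero]
      exact ⟨by linear_combination hx, by ring⟩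
    · rw [sub_eq_zero.1 h]
      simp only [Derivation.leibniz, smul_eq_mul, Derivation.map_ofNat, hxx, map_zero]
      exact ⟨by ring, by ring⟩
    · simp
  · rintro ⟨hkdv, hwr⟩
    by_cases hu : u = 0
    · exact Or.inr hu
    by_cases hxx : Dx (Dx u) = 0
    · have hxxx : Dx (Dx (Dx u)) = 0 := by rw [hxx, map_zero]
      exact Or.inl (Or.inr ⟨⟨by linear_combination hkdv - hxxx, hxx⟩, hu⟩)
    · have ht : Dt u = 0 := by
        simpa [hu, hxx] using pow_three_mul_eq_zero_of_kdv_wronskian hcomm hkdv hwr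
      exact Or.inl (Or.inl ⟨⟨ht, by linear_combination hkdv - ht⟩, hu, hxx⟩)

end KdVWronskian

local notation "𝒜" => analyticFunctions ℝ (ℝ × ℝ)
local notation "∂ₜ" => analyticFunctions.dirDeriv ℝ ((1, 0) : ℝ × ℝ)
local notation "∂ₓ" => analyticFunctions.dirDeriv ℝ ((0, 1) : ℝ × ℝ)

namespace analyticFunctions

lemma deriv_comp_prodMk_left (f : 𝒜) (x : ℝ) :
    deriv (fun s => (f : ℝ × ℝ → ℝ) (s, x)) = fun s => (∂ₜ f : ℝ × ℝ → ℝ) (s, x) :=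
  funext fun s => ((differentiableAt_coe f _).hasFDerivAt.comp_hasDerivAt s
    ((hasDerivAt_id s).prodMk (hasDerivAt_const s x))).deriv

lemma deriv_comp_prodMk_right (f : 𝒜) (t : ℝ) :
    deriv (fun y => (f : ℝ × ℝ → ℝ) (t, y)) = fun y => (∂ₓ f : ℝ × ℝ → ℝ) (t, y) :=
  funext fun y => ((differentiableAt_coe f _).hasFDerivAt.comp_hasDerivAt y
    ((hasDerivAt_const y t).prodMk (hasDerivAt_id y))).deriv

lemma eq_zero_iff_forall (f : 𝒜) : f = 0 ↔ ∀ t x, (f : ℝ × ℝ → ℝ) (t, x) = 0 := by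
  rw [Subtype.ext_iff, funext_iff, Prod.forall]
  rfl

def ofCurried (u : ℝ → ℝ → ℝ) (hu : AnalyticOnNhd ℝ (fun p : ℝ × ℝ => u p.1 p.2) univ) : 𝒜 :=
  ⟨fun p => u p.1 p.2, hu⟩

section ofCurried

variable {u : ℝ → ℝ → ℝ} (hu : AnalyticOnNhd ℝ (fun p : ℝ × ℝ => u p.1 p.2) univ)

@[simp]
lemma ofCurried_apply (t x : ℝ) : (ofCurried u hu : ℝ × ℝ → ℝ) (t, x) = u t x := rfl

lemma deriv_ofCurried_left (x : ℝ) :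
    deriv (fun s => u s x) = fun s => (∂ₜ (ofCurried u hu) : ℝ × ℝ → ℝ) (s, x) :=
  deriv_comp_prodMk_left (ofCurried u hu) x

lemma deriv_ofCurried_right (t : ℝ) :
    deriv (u t) = fun y => (∂ₓ (ofCurried u hu) : ℝ × ℝ → ℝ) (t, y) :=
  deriv_comp_prodMk_right (ofCurried u hu) t

end ofCurried

end analyticFunctions

section

open analyticFunctions

variable {u : ℝ → ℝ → ℝ} (hu : AnalyticOnNhd ℝ (fun p : ℝ × ℝ => u p.1 p.2) univ)

lemma mem_thomasSys1_iff : u ∈ ThomasSys1 ↔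
    (∂ₜ (ofCurried u hu) = 0 ∧
      ∂ₓ (∂ₓ (∂ₓ (ofCurried u hu))) - 6 * ofCurried u hu * ∂ₓ (ofCurried u hu) = 0) ∧
    ofCurried u hu ≠ 0 ∧ ∂ₓ (∂ₓ (ofCurried u hu)) ≠ 0 := by
  simp [ThomasSys1, hu, eq_zero_iff_forall, forall_and, deriv_ofCurried_left hu,
    deriv_ofCurried_right hu, deriv_comp_prodMk_right]

lemma mem_thomasSys2_iff : u ∈ ThomasSys2 ↔
    (∂ₜ (ofCurried u hu) - 6 * ofCurried u hu * ∂ₓ (ofCurried u hu) = 0 ∧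
      ∂ₓ (∂ₓ (ofCurried u hu)) = 0) ∧ ofCurried u hu ≠ 0 := by
  simp [ThomasSys2, hu, eq_zero_iff_forall, forall_and, deriv_ofCurried_left hu,
    deriv_ofCurried_right hu, deriv_comp_prodMk_right]

lemma mem_thomasSys3_iff : u ∈ ThomasSys3 ↔ ofCurried u hu = 0 := by
  simp [ThomasSys3, hu, eq_zero_iff_forall]

lemma mem_kdvWronskianSol_iff : u ∈ KdVWronskianSol ↔
    ∂ₜ (ofCurried u hu) - 6 * ofCurried u hu * ∂ₓ (ofCurried u hu)
        + ∂ₓ (∂ₓ (∂ₓ (ofCurried u hu))) = 0 ∧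
      ofCurried u hu * ∂ₓ (∂ₜ (ofCurried u hu))
        - ∂ₜ (ofCurried u hu) * ∂ₓ (ofCurried u hu) = 0 := by
  simp [KdVWronskianSol, hu, eq_zero_iff_forall, forall_and, deriv_ofCurried_left hu,
    deriv_ofCurried_right hu, deriv_comp_prodMk_right]

end

/-- The Thomas decomposition of the KdV–Wronskian system is a partition of its
solution set: the three simple systems have pairwise disjoint solution sets whose
union is the solution set of the original system. -/
theorem kdv_wronskian_thomas_partition :
    (ThomasSys1 ∩ ThomasSys2 = ∅ ∧ ThomasSys1 ∩ ThomasSys3 = ∅ ∧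
      ThomasSys2 ∩ ThomasSys3 = ∅) ∧
    ThomasSys1 ∪ ThomasSys2 ∪ ThomasSys3 = KdVWronskianSol := by
  refine ⟨⟨?_, ?_, ?_⟩, ?_⟩
  · exact eq_empty_of_forall_notMem fun u ⟨⟨_, _, _, hxx⟩, _, h2, _⟩ =>
      hxx fun t x => (h2 t x).2
  · exact eq_empty_of_forall_notMem fun u ⟨⟨_, _, hu, _⟩, _, h0⟩ => hu h0
  · exact eq_empty_of_forall_notMem fun u ⟨⟨_, _, hu⟩, _, h0⟩ => hu h0
  · ext u
    by_cases hu : AnalyticOnNhd ℝ (fun p : ℝ × ℝ => u p.1 p.2) univ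
    · rw [mem_union, mem_union, mem_thomasSys1_iff hu, mem_thomasSys2_iff hu,
        mem_thomasSys3_iff hu, mem_kdvWronskianSol_iff hu]
      exact kdv_wronskian_thomas_decomposition (analyticFunctions.dirDeriv_comm _ _) _
    · simp [ThomasSys1, ThomasSys2, ThomasSys3, KdVWronskianSol, hu]
end

section
/- Suppose u : ℝ² → ℝ is analytic on a connected open set, nowhere zero, and a ∈ ℝ is a constant such that u_x u_y + u_x + 1 = 0 and u u_{xx} − u_x − u_y² + a u = 0 hold identically. Then a = 0. -/
/-!
Write `w = u_y`. The first equation gives `u_x = -1/(w + 1)`; differentiating it shows that along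
the characteristic direction `χ = (-(w + 1)², 1)` the function `w` is constant while `u` has slope
`2w + 1`. Hence every relation `Ψ(u, w) = 0` valid on `U` implies `(2w + 1) ∂Ψ/∂u = 0`.

Eliminating `u_xx` with the second equation gives `u u_xy = (w + 1) P(u, w)` with
`P = w²(w + 1) - 1 - a u (w + 1)`, and differentiating this along `χ` (which needs `u_xy = u_yx`)
yields the integrability relation `Φ = 2(w + 1)² P² + (2w + 1)(w²(w + 1) - 1) = 0`. Applying the
principle to `Φ` gives `a (2w + 1) P = 0`, hence `a P = 0` (where `2w + 1 = 0`, `Φ = 0` forces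
`P = 0`), and applying it to `a P` gives
`a² (w + 1)(2w + 1) = 0`. So if `a ≠ 0` then `w = -1/2` on `U`, and `a P = 0` makes `u` constant,
contradicting `u_y = -1/2`.
-/

open Set Filter Topology

noncomputable def partialFst (f : ℝ × ℝ → ℝ) (z : ℝ × ℝ) : ℝ := fderiv ℝ f z (1, 0)

noncomputable def partialSnd (f : ℝ × ℝ → ℝ) (z : ℝ × ℝ) : ℝ := fderiv ℝ f z (0, 1)

local notation "∂₁" => partialFst
local notation "∂₂" => partialSnd

theorem fderiv_apply_prodMk (f : ℝ × ℝ → ℝ) (z : ℝ × ℝ) (x y : ℝ) :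
    fderiv ℝ f z (x, y) = x * ∂₁ f z + y * ∂₂ f z := by
  have h : ((x, y) : ℝ × ℝ) = x • (1, 0) + y • (0, 1) := by ext <;> simp
  rw [h, map_add, map_smul, map_smul]
  rfl

theorem hasDerivAt_partialFst {f : ℝ × ℝ → ℝ} {p : ℝ × ℝ} (hf : DifferentiableAt ℝ f p) :
    HasDerivAt (fun x => f (x, p.2)) (∂₁ f p) p.1 :=
  hf.hasFDerivAt.comp_hasDerivAt p.1 ((hasDerivAt_id p.1).prodMk (hasDerivAt_const p.1 p.2))

theorem hasDerivAt_partialSnd {f : ℝ × ℝ → ℝ} {p : ℝ × ℝ} (hf : DifferentiableAt ℝ f p) :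
    HasDerivAt (fun y => f (p.1, y)) (∂₂ f p) p.2 :=
  hf.hasFDerivAt.comp_hasDerivAt p.2 ((hasDerivAt_const p.2 p.1).prodMk (hasDerivAt_id p.2))

theorem fderiv_eq_of_eqOn {E F : Type*} [NormedAddCommGroup E] [NormedSpace ℝ E]
    [NormedAddCommGroup F] [NormedSpace ℝ F] {f g : E → F} {U : Set E} {p : E}
    (hU : IsOpen U) (hp : p ∈ U) (hfg : EqOn f g U) : fderiv ℝ f p = fderiv ℝ g p :=
  (hfg.eventuallyEq_of_mem (hU.mem_nhds hp)).fderiv_eq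

theorem HasFDerivAt.eq_zero_of_eqOn_zero {E F : Type*} [NormedAddCommGroup E] [NormedSpace ℝ E]
    [NormedAddCommGroup F] [NormedSpace ℝ F] {f : E → F} {f' : E →L[ℝ] F} {U : Set E} {p : E}
    (hU : IsOpen U) (hp : p ∈ U) (hf : HasFDerivAt f f' p) (h0 : ∀ z ∈ U, f z = 0) : f' = 0 := by
  rw [← hf.fderiv, fderiv_eq_of_eqOn (g := fun _ => 0) hU hp h0, fderiv_const_apply]

section Analytic

variable {f : ℝ × ℝ → ℝ} {U : Set (ℝ × ℝ)} {p : ℝ × ℝ}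

theorem AnalyticOnNhd.partialFst (hf : AnalyticOnNhd ℝ f U) : AnalyticOnNhd ℝ (∂₁ f) U :=
  (ContinuousLinearMap.apply ℝ ℝ ((1, 0) : ℝ × ℝ)).comp_analyticOnNhd hf.fderiv

theorem AnalyticOnNhd.partialSnd (hf : AnalyticOnNhd ℝ f U) : AnalyticOnNhd ℝ (∂₂ f) U :=
  (ContinuousLinearMap.apply ℝ ℝ ((0, 1) : ℝ × ℝ)).comp_analyticOnNhd hf.fderiv

theorem AnalyticOnNhd.partialFst_partialSnd (hf : AnalyticOnNhd ℝ f U) (hp : p ∈ U) :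
    ∂₁ (∂₂ f) p = ∂₂ (∂₁ f) p := by
  have hd : DifferentiableAt ℝ (fderiv ℝ f) p := (hf.fderiv p hp).differentiableAt
  have happly : ∀ c d : ℝ × ℝ,
      fderiv ℝ (fun z => fderiv ℝ f z c) p d = fderiv ℝ (fderiv ℝ f) p d c :=
    fun c d => by simp [(hd.hasFDerivAt.clm_apply (hasFDerivAt_const c p)).fderiv]
  change fderiv ℝ (fun z => fderiv ℝ f z (0, 1)) p (1, 0) =
    fderiv ℝ (fun z => fderiv ℝ f z (1, 0)) p (0, 1)
  rw [happly, happly]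
  exact (hf p hp).contDiffAt.isSymmSndFDerivAt_of_omega (1, 0) (0, 1)

theorem AnalyticOnNhd.deriv_deriv_eq_partialFst_partialFst (hU : IsOpen U)
    (hf : AnalyticOnNhd ℝ f U) (hp : p ∈ U) :
    deriv (fun x => deriv (fun r => f (r, p.2)) x) p.1 = ∂₁ (∂₁ f) p := by
  have hline : ∀ᶠ x in 𝓝 p.1, (x, p.2) ∈ U :=
    (continuous_id.prodMk continuous_const).continuousAt.preimage_mem_nhds (hU.mem_nhds hp)
  have hev : (fun x => deriv (fun r => f (r, p.2)) x) =ᶠ[𝓝 p.1] fun x => ∂₁ f (x, p.2) := by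
    filter_upwards [hline] with x hx using (hasDerivAt_partialFst (hf _ hx).differentiableAt).deriv
  rw [hev.deriv_eq]
  exact (hasDerivAt_partialFst (hf.partialFst p hp).differentiableAt).deriv

end Analytic

theorem fderiv_comp_apply_of_fderiv_apply_eq_zero {E : Type*} [NormedAddCommGroup E]
    [NormedSpace ℝ E] {f g : E → ℝ} {Ψ : ℝ → ℝ → ℝ} {p ℓ : E} {d : ℝ}
    (hΨ : DifferentiableAt ℝ (fun q : ℝ × ℝ => Ψ q.1 q.2) (f p, g p))
    (hf : DifferentiableAt ℝ f p) (hg : DifferentiableAt ℝ g p)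
    (hd : HasDerivAt (fun s => Ψ s (g p)) d (f p)) (hgℓ : fderiv ℝ g p ℓ = 0) :
    fderiv ℝ (fun z => Ψ (f z) (g z)) p ℓ = d * fderiv ℝ f p ℓ := by
  have hcomp := hΨ.hasFDerivAt.comp p (hf.hasFDerivAt.prodMk hg.hasFDerivAt)
  rw [hd.unique (hasDerivAt_partialFst hΨ), show (fun z => Ψ (f z) (g z)) =
    (fun q : ℝ × ℝ => Ψ q.1 q.2) ∘ fun z => (f z, g z) from rfl, hcomp.fderiv]
  simp [hgℓ, fderiv_apply_prodMk, mul_comm]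

def mixedPoly (a s y : ℝ) : ℝ := y ^ 2 * (y + 1) - 1 - a * s * (y + 1)

def integrabilityPoly (a s y : ℝ) : ℝ :=
  2 * (y + 1) ^ 2 * mixedPoly a s y ^ 2 + (2 * y + 1) * (y ^ 2 * (y + 1) - 1)

theorem hasDerivAt_mixedPoly (a s y : ℝ) :
    HasDerivAt (fun s => mixedPoly a s y) (-(a * (y + 1))) s := by
  unfold mixedPoly
  simpa using (((hasDerivAt_id s).const_mul a).mul_const (y + 1)).const_sub (y ^ 2 * (y + 1) - 1)

theorem hasDerivAt_integrabilityPoly (a s y : ℝ) :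
    HasDerivAt (fun s => integrabilityPoly a s y)
      (-(4 * a * (y + 1) ^ 3 * mixedPoly a s y)) s := by
  unfold integrabilityPoly
  refine ((((hasDerivAt_mixedPoly a s y).fun_pow 2).const_mul (2 * (y + 1) ^ 2)).add_const
    ((2 * y + 1) * (y ^ 2 * (y + 1) - 1))).congr_deriv ?_
  norm_num
  ring

structure IsSolution (a : ℝ) (U : Set (ℝ × ℝ)) (v : ℝ × ℝ → ℝ) : Prop where
  isOpen : IsOpen U
  analyticOnNhd : AnalyticOnNhd ℝ v U
  first_eqn : ∀ p ∈ U, ∂₁ v p * ∂₂ v p + ∂₁ v p + 1 = 0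
  second_eqn : ∀ p ∈ U, v p * ∂₁ (∂₁ v) p - ∂₁ v p - ∂₂ v p ^ 2 + a * v p = 0

noncomputable def charDir (v : ℝ × ℝ → ℝ) (p : ℝ × ℝ) : ℝ × ℝ := (-(∂₂ v p + 1) ^ 2, 1)

namespace IsSolution

variable {a : ℝ} {U : Set (ℝ × ℝ)} {v : ℝ × ℝ → ℝ} {p : ℝ × ℝ}

theorem partialSnd_add_one_ne_zero (hs : IsSolution a U v) (hp : p ∈ U) : ∂₂ v p + 1 ≠ 0 :=
  fun h => one_ne_zero (by linear_combination hs.first_eqn p hp - ∂₁ v p * h : (1 : ℝ) = 0)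

theorem fderiv_charDir (hs : IsSolution a U v) (hp : p ∈ U) :
    fderiv ℝ v p (charDir v p) = 2 * ∂₂ v p + 1 := by
  rw [charDir, fderiv_apply_prodMk]
  linear_combination (-(∂₂ v p + 1)) * hs.first_eqn p hp

theorem fderiv_first_eqn (hs : IsSolution a U v) (hp : p ∈ U) (ℓ : ℝ × ℝ) :
    fderiv ℝ (∂₁ v) p ℓ * (∂₂ v p + 1) + ∂₁ v p * fderiv ℝ (∂₂ v) p ℓ = 0 := by
  have hm := (hs.analyticOnNhd.partialFst p hp).differentiableAt.hasFDerivAt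
  have hw := (hs.analyticOnNhd.partialSnd p hp).differentiableAt.hasFDerivAt
  have hL : HasFDerivAt (fun z => ∂₁ v z * ∂₂ v z + ∂₁ v z + 1) _ p :=
    ((hm.mul hw).add hm).add_const 1
  have hℓ := DFunLike.congr_fun (hL.eq_zero_of_eqOn_zero hs.isOpen hp hs.first_eqn) ℓ
  simp only [add_apply, smul_apply, smul_eq_mul, zero_apply] at hℓ
  linear_combination hℓ

theorem sq_mul_partialFst_partialFst (hs : IsSolution a U v) (hp : p ∈ U) :
    (∂₂ v p + 1) ^ 2 * ∂₁ (∂₁ v) p = ∂₁ (∂₂ v) p := by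
  have h := hs.fderiv_first_eqn hp (1, 0)
  rw [fderiv_apply_prodMk, fderiv_apply_prodMk] at h
  linear_combination (∂₂ v p + 1) * h - ∂₁ (∂₂ v) p * hs.first_eqn p hp

theorem partialSnd_partialSnd (hs : IsSolution a U v) (hp : p ∈ U) :
    ∂₂ (∂₂ v) p = ∂₁ (∂₂ v) p * (∂₂ v p + 1) ^ 2 := by
  have h := hs.fderiv_first_eqn hp (0, 1)
  rw [fderiv_apply_prodMk, fderiv_apply_prodMk,
    ← hs.analyticOnNhd.partialFst_partialSnd hp] at h
  linear_combination (-(∂₂ v p + 1)) * h + ∂₂ (∂₂ v) p * hs.first_eqn p hp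

theorem fderiv_partialSnd_charDir (hs : IsSolution a U v) (hp : p ∈ U) :
    fderiv ℝ (∂₂ v) p (charDir v p) = 0 := by
  rw [charDir, fderiv_apply_prodMk, hs.partialSnd_partialSnd hp]
  ring

theorem mul_partialFst_partialSnd (hs : IsSolution a U v) (hp : p ∈ U) :
    v p * ∂₁ (∂₂ v) p = (∂₂ v p + 1) * mixedPoly a (v p) (∂₂ v p) := by
  rw [← hs.sq_mul_partialFst_partialFst hp, mixedPoly]
  linear_combination (∂₂ v p + 1) ^ 2 * hs.second_eqn p hp + (∂₂ v p + 1) * hs.first_eqn p hp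

theorem fderiv_partialFst_partialSnd_charDir (hs : IsSolution a U v) (hp : p ∈ U) :
    fderiv ℝ (∂₁ (∂₂ v)) p (charDir v p) = 2 * (∂₂ v p + 1) * ∂₁ (∂₂ v) p ^ 2 := by
  have hw := hs.analyticOnNhd.partialSnd
  have hF := (hw.partialFst p hp).differentiableAt.hasFDerivAt
  have hW : HasFDerivAt (fun z => ∂₁ (∂₂ v) z * (∂₂ v z + 1) ^ 2) _ p :=
    hF.mul (((hw p hp).differentiableAt.hasFDerivAt.add_const 1).pow 2)
  have h := DFunLike.congr_fun ((fderiv_eq_of_eqOn hs.isOpen hp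
    fun z hz => hs.partialSnd_partialSnd hz).trans hW.fderiv) (1, 0)
  simp only [add_apply, smul_apply, smul_eq_mul, fderiv_apply_prodMk] at h
  rw [charDir, fderiv_apply_prodMk, ← hw.partialFst_partialSnd hp]
  linear_combination h

theorem fderiv_comp_charDir (hs : IsSolution a U v) (hp : p ∈ U) {Ψ : ℝ → ℝ → ℝ} {d : ℝ}
    (hΨ : Differentiable ℝ fun q : ℝ × ℝ => Ψ q.1 q.2)
    (hd : HasDerivAt (fun s => Ψ s (∂₂ v p)) d (v p)) :
    fderiv ℝ (fun z => Ψ (v z) (∂₂ v z)) p (charDir v p) = d * (2 * ∂₂ v p + 1) := by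
  rw [fderiv_comp_apply_of_fderiv_apply_eq_zero (hΨ _) (hs.analyticOnNhd p hp).differentiableAt
    (hs.analyticOnNhd.partialSnd p hp).differentiableAt hd (hs.fderiv_partialSnd_charDir hp),
    hs.fderiv_charDir hp]

theorem mul_two_mul_partialSnd_add_one_eq_zero (hs : IsSolution a U v) (hp : p ∈ U)
    {Ψ : ℝ → ℝ → ℝ} {d : ℝ} (hΨ : Differentiable ℝ fun q : ℝ × ℝ => Ψ q.1 q.2)
    (hd : HasDerivAt (fun s => Ψ s (∂₂ v p)) d (v p)) (h0 : ∀ z ∈ U, Ψ (v z) (∂₂ v z) = 0) :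
    d * (2 * ∂₂ v p + 1) = 0 := by
  rw [← hs.fderiv_comp_charDir hp hΨ hd, fderiv_eq_of_eqOn (g := fun _ => 0) hs.isOpen hp h0,
    fderiv_const_apply, zero_apply]

theorem integrabilityPoly_eq_zero (hs : IsSolution a U v) (hp : p ∈ U) :
    integrabilityPoly a (v p) (∂₂ v p) = 0 := by
  have hvF := hs.fderiv_comp_charDir hp (Ψ := fun s y => (y + 1) * mixedPoly a s y)
    (by unfold mixedPoly; fun_prop) ((hasDerivAt_mixedPoly a (v p) (∂₂ v p)).const_mul _)
  rw [← fderiv_eq_of_eqOn hs.isOpen hp fun z hz => hs.mul_partialFst_partialSnd hz,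
    fderiv_fun_mul (hs.analyticOnNhd p hp).differentiableAt
      (hs.analyticOnNhd.partialSnd.partialFst p hp).differentiableAt] at hvF
  simp only [add_apply, smul_apply, smul_eq_mul, hs.fderiv_charDir hp,
    hs.fderiv_partialFst_partialSnd_charDir hp] at hvF
  have hI := hs.mul_partialFst_partialSnd hp
  have hP : ∂₂ v p ^ 2 * (∂₂ v p + 1) - 1 =
      mixedPoly a (v p) (∂₂ v p) + a * v p * (∂₂ v p + 1) := by
    rw [mixedPoly]; ring
  have h : (∂₂ v p + 1) * integrabilityPoly a (v p) (∂₂ v p) = 0 := by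
    rw [integrabilityPoly]
    linear_combination v p * hvF - (2 * (∂₂ v p + 1) * (v p * ∂₁ (∂₂ v) p
      + (∂₂ v p + 1) * mixedPoly a (v p) (∂₂ v p)) + (2 * ∂₂ v p + 1)) * hI
      + (∂₂ v p + 1) * (2 * ∂₂ v p + 1) * hP
  exact (mul_eq_zero.mp h).resolve_left (hs.partialSnd_add_one_ne_zero hp)

theorem mul_mixedPoly_mul_eq_zero (hs : IsSolution a U v) (hp : p ∈ U) :
    a * mixedPoly a (v p) (∂₂ v p) * (2 * ∂₂ v p + 1) = 0 := by
  have h := hs.mul_two_mul_partialSnd_add_one_eq_zero hp (Ψ := integrabilityPoly a)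
    (by unfold integrabilityPoly mixedPoly; fun_prop) (hasDerivAt_integrabilityPoly a _ _)
    fun z hz => hs.integrabilityPoly_eq_zero hz
  have h' : (∂₂ v p + 1) ^ 3 * (a * mixedPoly a (v p) (∂₂ v p) * (2 * ∂₂ v p + 1)) = 0 := by
    linear_combination -h / 4
  exact (mul_eq_zero.mp h').resolve_left (pow_ne_zero 3 (hs.partialSnd_add_one_ne_zero hp))

theorem mul_mixedPoly_eq_zero (hs : IsSolution a U v) (hp : p ∈ U) :
    a * mixedPoly a (v p) (∂₂ v p) = 0 := by
  by_cases h : 2 * ∂₂ v p + 1 = 0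
  · have hI := hs.integrabilityPoly_eq_zero hp
    rw [integrabilityPoly, h, zero_mul, add_zero] at hI
    have hP : mixedPoly a (v p) (∂₂ v p) = 0 := by
      simpa [hs.partialSnd_add_one_ne_zero hp] using hI
    rw [hP, mul_zero]
  · exact (mul_eq_zero.mp (hs.mul_mixedPoly_mul_eq_zero hp)).resolve_right h

theorem two_mul_partialSnd_add_one_eq_zero (hs : IsSolution a U v) (ha : a ≠ 0) (hp : p ∈ U) :
    2 * ∂₂ v p + 1 = 0 := by
  have h := hs.mul_two_mul_partialSnd_add_one_eq_zero hp (Ψ := fun s y => a * mixedPoly a s y)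
    (by unfold mixedPoly; fun_prop) ((hasDerivAt_mixedPoly a _ _).const_mul a)
    fun z hz => hs.mul_mixedPoly_eq_zero hz
  have h' : a ^ 2 * (∂₂ v p + 1) * (2 * ∂₂ v p + 1) = 0 := by linear_combination -h
  exact (mul_eq_zero.mp h').resolve_left
    (mul_ne_zero (pow_ne_zero 2 ha) (hs.partialSnd_add_one_ne_zero hp))

theorem eq_zero (hs : IsSolution a U v) (hU : U.Nonempty) : a = 0 := by
  by_contra ha
  obtain ⟨p, hp⟩ := hU
  have hconst : ∀ z ∈ U, v z = -7 / (4 * a) := by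
    intro z hz
    have hw : ∂₂ v z = -1 / 2 := by linarith [hs.two_mul_partialSnd_add_one_eq_zero ha hz]
    have h := hs.mul_mixedPoly_eq_zero hz
    rw [mixedPoly, hw] at h
    have h' : a * (4 * a * v z + 7) = 0 := by linear_combination (-8) * h
    field_simp
    linear_combination (mul_eq_zero.mp h').resolve_left ha
  have h := DFunLike.congr_fun (fderiv_eq_of_eqOn hs.isOpen hp hconst) (0, 1)
  rw [fderiv_apply_prodMk, fderiv_const_apply, zero_apply] at h
  linarith [hs.two_mul_partialSnd_add_one_eq_zero ha hp]

end IsSolution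

theorem consistency_forces_a_zero_general (u : ℝ → ℝ → ℝ) (a : ℝ) (U : Set (ℝ × ℝ))
    (hUo : IsOpen U) (hUc : IsConnected U)
    (hu : AnalyticOnNhd ℝ (fun p : ℝ × ℝ => u p.1 p.2) U)
    (h1 : ∀ p ∈ U, deriv (fun s => u s p.2) p.1 * deriv (u p.1) p.2
      + deriv (fun s => u s p.2) p.1 + 1 = 0)
    (h2 : ∀ p ∈ U, u p.1 p.2 * deriv (fun s => deriv (fun r => u r p.2) s) p.1
      - deriv (fun s => u s p.2) p.1 - (deriv (u p.1) p.2) ^ 2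
      + a * u p.1 p.2 = 0) :
    a = 0 := by
  have e₁ : ∀ p ∈ U, deriv (fun s => u s p.2) p.1 = ∂₁ (fun q : ℝ × ℝ => u q.1 q.2) p :=
    fun p hp => (hasDerivAt_partialFst (hu p hp).differentiableAt).deriv
  have e₂ : ∀ p ∈ U, deriv (u p.1) p.2 = ∂₂ (fun q : ℝ × ℝ => u q.1 q.2) p :=
    fun p hp => (hasDerivAt_partialSnd (hu p hp).differentiableAt).deriv
  have e₁₁ : ∀ p ∈ U, deriv (fun s => deriv (fun r => u r p.2) s) p.1 =
      ∂₁ (∂₁ fun q : ℝ × ℝ => u q.1 q.2) p :=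
    fun p hp => hu.deriv_deriv_eq_partialFst_partialFst hUo hp
  refine IsSolution.eq_zero ⟨hUo, hu, fun p hp => ?_, fun p hp => ?_⟩ hUc.nonempty
  · rw [← e₁ p hp, ← e₂ p hp]
    exact h1 p hp
  · rw [← e₁ p hp, ← e₂ p hp, ← e₁₁ p hp]
    exact h2 p hp

/-- Consistency of the system u_x u_y + u_x + 1 = 0,
u u_{xx} - u_x - u_y² + a u = 0 forces a = 0: if u is analytic on a nonempty
connected open set, nowhere zero there, and both equations hold identically on it,
then a = 0. -/
theorem consistency_forces_a_zero (u : ℝ → ℝ → ℝ) (a : ℝ) (U : Set (ℝ × ℝ))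
    (hUo : IsOpen U) (hUc : IsConnected U)
    (hu : AnalyticOnNhd ℝ (fun p : ℝ × ℝ => u p.1 p.2) U)
    (hne : ∀ p ∈ U, u p.1 p.2 ≠ 0)
    (h1 : ∀ p ∈ U, deriv (fun s => u s p.2) p.1 * deriv (u p.1) p.2
      + deriv (fun s => u s p.2) p.1 + 1 = 0)
    (h2 : ∀ p ∈ U, u p.1 p.2 * deriv (fun s => deriv (fun r => u r p.2) s) p.1
      - deriv (fun s => u s p.2) p.1 - (deriv (u p.1) p.2) ^ 2
      + a * u p.1 p.2 = 0) :
    a = 0 :=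
  consistency_forces_a_zero_general u a U hUo hUc hu h1 h2
end

section
/- Let m(t) = (u(t), v(t), w(t)) be a C¹ unit vector field (u² + v² + w² = 1) satisfying the Landau–Lifshitz–Gilbert equations (α²+1) m' = α m × (m × h) − α m × j − m × h − m × (m × j) with h = (0,0,h₃ − λ w), j = (0,0,j₃), together with w' = 0, where α ≠ 0, j₃ ≠ 0, h₃ ≠ 0 are constants and λ ∈ ℝ. If w is not constantly 1 and not constantly −1, i.e. if u² + v² is nonzero at some point, then α λ w(t) = α h₃ − j₃ for all t (at any point where u(t)² + v(t)² ≠ 0). -/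
open Matrix

lemma crossProduct_cross_e₃_apply_two {R : Type*} [CommRing R] (x y z a : R) :
    crossProduct ![x, y, z] (crossProduct ![x, y, z] ![0, 0, a]) 2 = -a * (x ^ 2 + y ^ 2) := by
  simp only [cross_apply, Fin.isValue, cons_val_zero, cons_val_one, cons_val]
  ring

lemma crossProduct_e₃_apply_two {R : Type*} [CommRing R] (x y z a : R) :
    crossProduct ![x, y, z] ![0, 0, a] 2 = 0 := by
  simp [cross_apply]

lemma llg_torque_apply_two {R : Type*} [CommRing R] (α x y z a b : R) :
    (α • crossProduct ![x, y, z] (crossProduct ![x, y, z] ![0, 0, a])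
        - α • crossProduct ![x, y, z] ![0, 0, b]
        - crossProduct ![x, y, z] ![0, 0, a]
        - crossProduct ![x, y, z] (crossProduct ![x, y, z] ![0, 0, b])) 2
      = (x ^ 2 + y ^ 2) * (b - α * a) := by
  simp only [Pi.sub_apply, Pi.smul_apply, smul_eq_mul, crossProduct_cross_e₃_apply_two,
    crossProduct_e₃_apply_two]
  ring

theorem llg_generic_equation_general (α lam h₃ j₃ : ℝ)
    (u v w : ℝ → ℝ)
    (hw' : ∀ t, deriv w t = 0)
    (hLLG : ∀ t,
      (α ^ 2 + 1) • (![deriv u t, deriv v t, deriv w t] : Fin 3 → ℝ)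
        = α • crossProduct ![u t, v t, w t]
            (crossProduct ![u t, v t, w t] ![0, 0, h₃ - lam * w t])
          - α • crossProduct ![u t, v t, w t] ![0, 0, j₃]
          - crossProduct ![u t, v t, w t] ![0, 0, h₃ - lam * w t]
          - crossProduct ![u t, v t, w t]
              (crossProduct ![u t, v t, w t] ![0, 0, j₃])) :
    ∀ t, (u t) ^ 2 + (v t) ^ 2 ≠ 0 → α * lam * w t = α * h₃ - j₃ := by
  intro t ht
  have hz := congrFun (hLLG t) 2
  rw [llg_torque_apply_two] at hz
  simp only [Pi.smul_apply, Matrix.cons_val, hw' t, smul_zero] at hz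
  have hgeneric := (mul_eq_zero.mp hz.symm).resolve_left ht
  linarith

/-- For a C¹ unit-vector solution m = (u,v,w) of the Landau–Lifshitz–Gilbert
equations with h = (0,0,h₃ - λw), j = (0,0,j₃), w' = 0 and constants
α ≠ 0, j₃ ≠ 0, h₃ ≠ 0: at every point where u² + v² ≠ 0 the generic equation
α λ w = α h₃ - j₃ holds. -/
theorem llg_generic_equation (α lam h₃ j₃ : ℝ)
    (hα : α ≠ 0) (hj : j₃ ≠ 0) (hh : h₃ ≠ 0)
    (u v w : ℝ → ℝ)
    (hu : ContDiff ℝ 1 u) (hv : ContDiff ℝ 1 v) (hw : ContDiff ℝ 1 w)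
    (hunit : ∀ t, (u t) ^ 2 + (v t) ^ 2 + (w t) ^ 2 = 1)
    (hw' : ∀ t, deriv w t = 0)
    (hLLG : ∀ t,
      (α ^ 2 + 1) • (![deriv u t, deriv v t, deriv w t] : Fin 3 → ℝ)
        = α • crossProduct ![u t, v t, w t]
            (crossProduct ![u t, v t, w t] ![0, 0, h₃ - lam * w t])
          - α • crossProduct ![u t, v t, w t] ![0, 0, j₃]
          - crossProduct ![u t, v t, w t] ![0, 0, h₃ - lam * w t]
          - crossProduct ![u t, v t, w t]
              (crossProduct ![u t, v t, w t] ![0, 0, j₃])) :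
    ∀ t, (u t) ^ 2 + (v t) ^ 2 ≠ 0 → α * lam * w t = α * h₃ - j₃ :=
  llg_generic_equation_general α lam h₃ j₃ u v w hw' hLLG
end
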